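/- arXiv:2407.02993 — 4 statements merged into one kernel-verified Lean document; each statement's English description precedes it below -/
import Mathlib

section
/- Let H be a complex Hilbert space and P, Q ∈ B(H) orthogonal projections such that P - Q is compact. Then the operator Q restricted to the range of P, viewed as an operator Ran(P) → Ran(Q), is Fredholm, with parametrix given by P restricted to Ran(Q). -/
/-!
Write `T = QP|_{Ran P}` and `S = PQ|_{Ran Q}`. On `Ran P` one has `ST - 1 = P(Q - P)` because
`P` fixes its range, and symmetrically `TS - 1 = Q(P - Q)` on `Ran Q`. Both are compact since
`P - Q` is, and they stay compact after corestriction because the range of an idempotent is closed.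
-/

namespace ContinuousLinearMap

variable {R M : Type*} [Ring R] [TopologicalSpace M] [AddCommGroup M] [Module R M]

def rangeCompression (P Q : M →L[R] M) : P.range →L[R] Q.range :=
  (Q ∘L P.range.subtypeL).codRestrict Q.range fun x => ⟨x, rfl⟩

@[simp]
theorem coe_rangeCompression_apply (P Q : M →L[R] M) (x : P.range) :
    (rangeCompression P Q x : M) = Q x :=
  rfl

theorem isCompactOperator_rangeCompression_comp_sub_one [IsTopologicalAddGroup M] [T1Space M]
    {P Q : M →L[R] M} (hP : IsIdempotentElem P) (hQP : IsCompactOperator ⇑(Q - P)) :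
    IsCompactOperator ⇑(rangeCompression Q P ∘L rangeCompression P Q - 1) := by
  have hrestrict : ⇑(rangeCompression Q P ∘L rangeCompression P Q - 1) =
      Set.codRestrict (⇑(P ∘L (Q - P)) ∘ P.range.subtypeL) P.range
        fun x => ⟨(Q - P) x, rfl⟩ := by
    ext x
    have hx : P x = x :=
      (LinearMap.IsIdempotentElem.mem_range_iff (IsIdempotentElem.toLinearMap hP)).mp x.2
    simp [hx]
  rw [hrestrict]
  exact ((hQP.clm_comp P).comp_clm _).codRestrict _ (IsIdempotentElem.isClosed_range hP)

end ContinuousLinearMap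

open ContinuousLinearMap in
theorem compression_fredholm_of_compact_difference_general
    {H : Type*} [NormedAddCommGroup H] [InnerProductSpace ℂ H] [CompleteSpace H]
    (P Q : H →L[ℂ] H)
    (hPidem : P * P = P)
    (hQidem : Q * Q = Q)
    (hdiff : IsCompactOperator ⇑(P - Q)) :
    ∃ (T : ↥(LinearMap.range (P : H →ₗ[ℂ] H)) →L[ℂ] ↥(LinearMap.range (Q : H →ₗ[ℂ] H)))
      (S : ↥(LinearMap.range (Q : H →ₗ[ℂ] H)) →L[ℂ] ↥(LinearMap.range (P : H →ₗ[ℂ] H))),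
      (∀ x : ↥(LinearMap.range (P : H →ₗ[ℂ] H)), (T x : H) = Q x) ∧
      (∀ y : ↥(LinearMap.range (Q : H →ₗ[ℂ] H)), (S y : H) = P y) ∧
      IsCompactOperator ⇑(S.comp T - 1) ∧
      IsCompactOperator ⇑(T.comp S - 1) := by
  have hQP : IsCompactOperator ⇑(Q - P) := by
    simpa only [← FunLike.coe_neg, neg_sub] using hdiff.neg
  exact ⟨rangeCompression P Q, rangeCompression Q P, coe_rangeCompression_apply P Q,
    coe_rangeCompression_apply Q P,
    isCompactOperator_rangeCompression_comp_sub_one hPidem hQP,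
    isCompactOperator_rangeCompression_comp_sub_one hQidem hdiff⟩

/-- If `P, Q` are orthogonal projections on a complex Hilbert space with `P - Q`
compact, then `Q : Ran(P) → Ran(Q)` is Fredholm, with parametrix `P : Ran(Q) → Ran(P)`. -/
theorem compression_fredholm_of_compact_difference
    {H : Type*} [NormedAddCommGroup H] [InnerProductSpace ℂ H] [CompleteSpace H]
    (P Q : H →L[ℂ] H)
    (hPsa : IsSelfAdjoint P) (hPidem : P * P = P)
    (hQsa : IsSelfAdjoint Q) (hQidem : Q * Q = Q)
    (hdiff : IsCompactOperator ⇑(P - Q)) :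
    ∃ (T : ↥(LinearMap.range (P : H →ₗ[ℂ] H)) →L[ℂ] ↥(LinearMap.range (Q : H →ₗ[ℂ] H)))
      (S : ↥(LinearMap.range (Q : H →ₗ[ℂ] H)) →L[ℂ] ↥(LinearMap.range (P : H →ₗ[ℂ] H))),
      (∀ x : ↥(LinearMap.range (P : H →ₗ[ℂ] H)), (T x : H) = Q x) ∧
      (∀ y : ↥(LinearMap.range (Q : H →ₗ[ℂ] H)), (S y : H) = P y) ∧
      IsCompactOperator ⇑(S.comp T - 1) ∧
      IsCompactOperator ⇑(T.comp S - 1) :=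
  compression_fredholm_of_compact_difference_general P Q hPidem hQidem hdiff
end

section
/- Let H be a complex Hilbert space, P ∈ B(H) an orthogonal projection, and U ∈ B(H) a unitary such that the commutator [P, U] = PU - UP is compact. Then P - U*PU is compact, the operator PUP : Ran(P) → Ran(P) is Fredholm with parametrix PU*P, and the relative index of the pair (P, U*PU) equals the Fredholm index of PUP : Ran(P) → Ran(P), i.e. relind(P, U*PU) = Index(PUP). -/
/-!
Modulo compact operators `P` commutes with `U`, hence also with `U⁻¹ = U*`. Thus
`P - U*PU = U*(UP - PU)` is compact, and on `Ran P` the products `(PU*P)(PUP) - 1` and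
`(PUP)(PU*P) - 1` are the compressions of the compact operators `PU*(PU - UP)` and
`PU(PU* - U*P)`. For the index, `U` restricts to an isomorphism `Ran (U*PU) ≃ Ran P` which turns
the restriction `U*PU : Ran P → Ran (U*PU)` into `PUP`, and composing with an isomorphism does
not change the Fredholm index.
-/

open Module in
/-- The Fredholm index of a linear map: `dim ker − dim coker` (as natural numbers cast to `ℤ`;
meaningful when the map is Fredholm). -/
noncomputable def fredIndex {E F : Type*} [AddCommGroup E] [AddCommGroup F]
    [Module ℂ E] [Module ℂ F] (T : E →ₗ[ℂ] F) : ℤ :=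
  (finrank ℂ (LinearMap.ker T) : ℤ) - (finrank ℂ (F ⧸ LinearMap.range T) : ℤ)

/-- The operator `Q : Ran(P) → Ran(Q)` obtained by restricting `Q`. -/
noncomputable def compress {H : Type*} [NormedAddCommGroup H] [InnerProductSpace ℂ H]
    (P Q : H →L[ℂ] H) : ↥(LinearMap.range (P : H →ₗ[ℂ] H)) →ₗ[ℂ] ↥(LinearMap.range (Q : H →ₗ[ℂ] H)) :=
  LinearMap.codRestrict (LinearMap.range (Q : H →ₗ[ℂ] H))
    ((Q : H →ₗ[ℂ] H).comp (LinearMap.range (P : H →ₗ[ℂ] H)).subtype)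
    (fun c => LinearMap.mem_range.mpr ⟨c, rfl⟩)

/-- The relative index of a pair of projections `(P, Q)` with compact difference:
the Fredholm index of `Q : Ran(P) → Ran(Q)`. -/
noncomputable def relind {H : Type*} [NormedAddCommGroup H] [InnerProductSpace ℂ H]
    (P Q : H →L[ℂ] H) : ℤ :=
  fredIndex (compress P Q)

/-- The compression `P U P : Ran(P) → Ran(P)`, `x ↦ P (U x)`. -/
noncomputable def compressEndo {H : Type*} [NormedAddCommGroup H] [InnerProductSpace ℂ H]
    (P U : H →L[ℂ] H) : ↥(LinearMap.range (P : H →ₗ[ℂ] H)) →ₗ[ℂ] ↥(LinearMap.range (P : H →ₗ[ℂ] H)) :=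
  LinearMap.codRestrict (LinearMap.range (P : H →ₗ[ℂ] H))
    (((P : H →ₗ[ℂ] H).comp (U : H →ₗ[ℂ] H)).comp (LinearMap.range (P : H →ₗ[ℂ] H)).subtype)
    (fun c => LinearMap.mem_range.mpr ⟨U c, rfl⟩)

open ContinuousLinearMap

lemma fredIndex_equiv_comp {E F G : Type*} [AddCommGroup E] [AddCommGroup F] [AddCommGroup G]
    [Module ℂ E] [Module ℂ F] [Module ℂ G] (T : E →ₗ[ℂ] F) (e : F ≃ₗ[ℂ] G) :
    fredIndex ((e : F →ₗ[ℂ] G) ∘ₗ T) = fredIndex T := by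
  have hker : LinearMap.ker ((e : F →ₗ[ℂ] G) ∘ₗ T) = LinearMap.ker T := by
    rw [LinearMap.ker_comp, LinearEquiv.ker, Submodule.comap_bot]
  have hcoker : (F ⧸ LinearMap.range T) ≃ₗ[ℂ] (G ⧸ LinearMap.range ((e : F →ₗ[ℂ] G) ∘ₗ T)) :=
    Submodule.Quotient.equiv _ _ e (LinearMap.range_comp _ _).symm
  rw [fredIndex, fredIndex, hker, hcoker.finrank_eq]

section Commutator

variable {𝕜 E : Type*} [NontriviallyNormedField 𝕜] [NormedAddCommGroup E] [NormedSpace 𝕜 E]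
  {P V W : E →L[𝕜] E}

lemma isCompactOperator_sub_conj (hVW : V * W = 1) (hPW : IsCompactOperator ⇑(P * W - W * P)) :
    IsCompactOperator ⇑(P - V * P * W) := by
  have h : P - V * P * W = V * -(P * W - W * P) := by
    rw [neg_sub, mul_sub, ← mul_assoc, hVW, one_mul, mul_assoc]
  rw [h]
  exact hPW.neg.clm_comp V

lemma isCompactOperator_commutator_of_inverse (hVW : V * W = 1) (hWV : W * V = 1)
    (hPW : IsCompactOperator ⇑(P * W - W * P)) : IsCompactOperator ⇑(P * V - V * P) := by
  have h : P * V - V * P = V * -(P * W - W * P) * V := by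
    calc P * V - V * P = V * W * P * V - V * P * (W * V) := by rw [hVW, hWV, one_mul, mul_one]
      _ = V * -(P * W - W * P) * V := by noncomm_ring
  rw [h]
  exact (hPW.neg.clm_comp V).comp_clm V

end Commutator

section Compression

variable {H : Type*} [NormedAddCommGroup H] [InnerProductSpace ℂ H] {P V W : H →L[ℂ] H}

@[simp]
lemma coe_compressEndo_apply (x : LinearMap.range (P : H →ₗ[ℂ] H)) :
    (compressEndo P W x : H) = P (W x) :=
  rfl

lemma compressEndo_comp_compressEndo_sub_id_eq_restrict (hP : IsIdempotentElem P)
    (hVW : V * W = 1) :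
    compressEndo P V ∘ₗ compressEndo P W -
      (LinearMap.id : Module.End ℂ (LinearMap.range (P : H →ₗ[ℂ] H))) =
      ((P * (V * (P * W - W * P)) : H →L[ℂ] H) : H →ₗ[ℂ] H).restrict
        fun _ _ => LinearMap.mem_range_self (P : H →ₗ[ℂ] H) _ := by
  ext x
  have hPx : P x = x := (LinearMap.IsIdempotentElem.mem_range_iff hP.toLinearMap).1 x.2
  have hVWx : V (W x) = x := by simpa using DFunLike.congr_fun hVW (x : H)
  simp [hPx, hVWx]

lemma isCompactOperator_compressEndo_comp_compressEndo_sub_id (hP : IsIdempotentElem P)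
    (hVW : V * W = 1) (hPW : IsCompactOperator ⇑(P * W - W * P)) :
    IsCompactOperator ⇑(compressEndo P V ∘ₗ compressEndo P W -
      (LinearMap.id : Module.End ℂ (LinearMap.range (P : H →ₗ[ℂ] H)))) := by
  rw [compressEndo_comp_compressEndo_sub_id_eq_restrict hP hVW]
  exact ((hPW.clm_comp V).clm_comp P).restrict _ (IsIdempotentElem.isClosed_range hP)

variable (P)

noncomputable def rangeConjEquiv (hVW : V * W = 1) (hWV : W * V = 1) :
    LinearMap.range ((V * P * W : H →L[ℂ] H) : H →ₗ[ℂ] H) ≃ₗ[ℂ]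
      LinearMap.range (P : H →ₗ[ℂ] H) :=
  LinearEquiv.ofLinearMap
    ((W : H →ₗ[ℂ] H).restrict fun _ ⟨c, hc⟩ =>
      ⟨W c, hc ▸ (DFunLike.congr_fun hWV (P (W c))).symm⟩)
    ((V : H →ₗ[ℂ] H).restrict fun _ ⟨c, hc⟩ =>
      ⟨V c, hc ▸ congrArg (fun y => V (P y)) (DFunLike.congr_fun hWV c)⟩)
    (LinearMap.ext fun x => Subtype.ext (DFunLike.congr_fun hWV (x : H)))
    (LinearMap.ext fun x => Subtype.ext (DFunLike.congr_fun hVW (x : H)))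

lemma compressEndo_eq_rangeConjEquiv_comp_compress (hVW : V * W = 1) (hWV : W * V = 1) :
    compressEndo P W = (rangeConjEquiv P hVW hWV : _ →ₗ[ℂ] _) ∘ₗ compress P (V * P * W) := by
  ext x
  exact (DFunLike.congr_fun hWV (P (W x))).symm

lemma relind_conj_eq_fredIndex_compressEndo (hVW : V * W = 1) (hWV : W * V = 1) :
    relind P (V * P * W) = fredIndex (compressEndo P W) := by
  rw [relind, compressEndo_eq_rangeConjEquiv_comp_compress P hVW hWV, fredIndex_equiv_comp]

end Compression

theorem relind_proj_conj_unitary_general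
    {H : Type*} [NormedAddCommGroup H] [InnerProductSpace ℂ H] [CompleteSpace H]
    (P U : H →L[ℂ] H)
    (hPidem : P * P = P)
    (hU₁ : star U * U = 1) (hU₂ : U * star U = 1)
    (hcomm : IsCompactOperator ⇑(P * U - U * P)) :
    IsCompactOperator ⇑(P - star U * P * U) ∧
    IsCompactOperator ⇑(compressEndo P (star U) ∘ₗ compressEndo P U - LinearMap.id :
      ↥(LinearMap.range (P : H →ₗ[ℂ] H)) →ₗ[ℂ] ↥(LinearMap.range (P : H →ₗ[ℂ] H))) ∧
    IsCompactOperator ⇑(compressEndo P U ∘ₗ compressEndo P (star U) - LinearMap.id :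
      ↥(LinearMap.range (P : H →ₗ[ℂ] H)) →ₗ[ℂ] ↥(LinearMap.range (P : H →ₗ[ℂ] H))) ∧
    relind P (star U * P * U) = fredIndex (compressEndo P U) :=
  ⟨isCompactOperator_sub_conj hU₁ hcomm,
    isCompactOperator_compressEndo_comp_compressEndo_sub_id hPidem hU₁ hcomm,
    isCompactOperator_compressEndo_comp_compressEndo_sub_id hPidem hU₂
      (isCompactOperator_commutator_of_inverse hU₁ hU₂ hcomm),
    relind_conj_eq_fredIndex_compressEndo P hU₁ hU₂⟩

/-- For an orthogonal projection `P` and a unitary `U` with `[P, U]` compact: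
`P - U*PU` is compact, `PUP : Ran(P) → Ran(P)` is Fredholm with parametrix `PU*P`, and
`relind(P, U*PU) = Index(PUP : Ran(P) → Ran(P))`. -/
theorem relind_proj_conj_unitary
    {H : Type*} [NormedAddCommGroup H] [InnerProductSpace ℂ H] [CompleteSpace H]
    (P U : H →L[ℂ] H)
    (hPsa : IsSelfAdjoint P) (hPidem : P * P = P)
    (hU₁ : star U * U = 1) (hU₂ : U * star U = 1)
    (hcomm : IsCompactOperator ⇑(P * U - U * P)) :
    IsCompactOperator ⇑(P - star U * P * U) ∧
    IsCompactOperator ⇑(compressEndo P (star U) ∘ₗ compressEndo P U - LinearMap.id :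
      ↥(LinearMap.range (P : H →ₗ[ℂ] H)) →ₗ[ℂ] ↥(LinearMap.range (P : H →ₗ[ℂ] H))) ∧
    IsCompactOperator ⇑(compressEndo P U ∘ₗ compressEndo P (star U) - LinearMap.id :
      ↥(LinearMap.range (P : H →ₗ[ℂ] H)) →ₗ[ℂ] ↥(LinearMap.range (P : H →ₗ[ℂ] H))) ∧
    relind P (star U * P * U) = fredIndex (compressEndo P U) :=
  relind_proj_conj_unitary_general P U hPidem hU₁ hU₂ hcomm
end

section
/- The even continuous functions vanishing at infinity on ℝ form the C*-subalgebra of C₀(ℝ) generated by the single function t ↦ (1 + t²)⁻¹; i.e., the closed *-subalgebra of C₀(ℝ,ℂ) generated by t ↦ 1/(1+t²) equals {f ∈ C₀(ℝ,ℂ) : f(-t) = f(t) for all t}. -/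
/-!
The even functions are exactly the functions that are constant on the fibres of
`g = (1 + t²)⁻¹`, since `g a = g b ↔ a = ± b`. For any `u ∈ C₀(X, 𝕜)`, a function `f ∈ C₀(X, 𝕜)`
that is constant on the fibres of `u` and vanishes where `u` does lies in the C⋆-algebra generated
by `u`: extended to the one-point compactification, `u` becomes a quotient map onto its compact
range `s ∋ 0`, so `f = F ∘ u` for some `F ∈ C(s, 𝕜)₀`, and `F` is a uniform limit of polynomials
in `z` and `z̄` without constant term (Stone–Weierstrass).
-/

open ZeroAtInfty

open Filter Topology Function Set NonUnitalStarAlgebra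
open scoped OnePoint ContinuousMapZero BoundedContinuousFunction

namespace ZeroAtInftyContinuousMap

section OnePoint

variable {X β γ : Type*} [TopologicalSpace X] [R1Space X] [TopologicalSpace β] [Zero β]
  [TopologicalSpace γ] [Zero γ]

noncomputable def toOnePoint (f : C₀(X, β)) : C(OnePoint X, β) :=
  OnePoint.continuousMapMk f 0 (by simpa using f.zero_at_infty')

lemma factorsThrough_toOnePoint {f : C₀(X, β)} {u : C₀(X, γ)} (hfu : FactorsThrough f u)
    (hf0 : ∀ x, u x = 0 → f x = 0) : FactorsThrough f.toOnePoint u.toOnePoint := by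
  rintro (_ | a) (_ | b) h
  · rfl
  · exact (hf0 b h.symm).symm
  · exact hf0 a h
  · exact hfu h

instance (f : C₀(X, β)) : Fact ((0 : β) ∈ range f.toOnePoint) := ⟨⟨∞, rfl⟩⟩

instance (f : C₀(X, β)) : CompactSpace (range f.toOnePoint) :=
  isCompact_iff_compactSpace.mp (isCompact_range f.toOnePoint.continuous)

end OnePoint

section Precomp

variable {X 𝕜 : Type*} [TopologicalSpace X] [RCLike 𝕜]

noncomputable def precompHom (u : C₀(X, 𝕜)) (s : Set 𝕜) [Fact (0 ∈ s)] (hu : ∀ x, u x ∈ s) :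
    C(s, 𝕜)₀ →⋆ₙₐ[𝕜] C₀(X, 𝕜) where
  toFun F :=
    { toFun x := F ⟨u x, hu x⟩
      continuous_toFun := by fun_prop
      zero_at_infty' := by
        have hu0 : Tendsto (fun x ↦ (⟨u x, hu x⟩ : s)) (cocompact X) (𝓝 0) :=
          tendsto_subtype_rng.mpr u.zero_at_infty'
        rw [← map_zero F]
        exact ((map_continuous F).tendsto 0).comp hu0 }
  map_zero' := rfl
  map_add' _ _ := rfl
  map_mul' _ _ := rfl
  map_star' _ := rfl
  map_smul' _ _ := rfl

variable (u : C₀(X, 𝕜)) {s : Set 𝕜} [Fact (0 ∈ s)] (hu : ∀ x, u x ∈ s)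

lemma precompHom_id : precompHom u s hu (.id s) = u := rfl

lemma norm_precompHom_le [CompactSpace s] (F : C(s, 𝕜)₀) : ‖precompHom u s hu F‖ ≤ ‖F‖ := by
  rw [← norm_toBCF_eq_norm, BoundedContinuousFunction.norm_le (norm_nonneg F)]
  exact fun x ↦ ContinuousMap.norm_coe_le_norm (F : C(s, 𝕜)) _

lemma continuous_precompHom [CompactSpace s] : Continuous (precompHom u s hu) :=
  AddMonoidHomClass.continuous_of_bound _ 1 fun F ↦ by
    simpa using norm_precompHom_le u hu F

lemma precompHom_mem_elemental [CompactSpace s] (F : C(s, 𝕜)₀) :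
    precompHom u s hu F ∈ elemental 𝕜 u := by
  have hF : F ∈ elemental 𝕜 (.id s : C(s, 𝕜)₀) := by
    simp [ContinuousMapZero.elemental_eq_top]
  have := NonUnitalStarSubalgebra.map_topologicalClosure_le _ (continuous_precompHom u hu)
    ⟨F, hF, rfl⟩
  rwa [NonUnitalStarAlgHom.map_adjoin_singleton, precompHom_id] at this

variable [R1Space X]

lemma exists_precompHom_eq {u f : C₀(X, 𝕜)} (hfu : FactorsThrough f u)
    (hf0 : ∀ x, u x = 0 → f x = 0) :
    ∃ F : C(range u.toOnePoint, 𝕜)₀,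
      precompHom u _ (fun x ↦ mem_range_self (x : OnePoint X)) F = f := by
  let q : C(OnePoint X, range u.toOnePoint) :=
    ⟨rangeFactorization u.toOnePoint, u.toOnePoint.continuous.rangeFactorization⟩
  have hq : IsQuotientMap q := .of_surjective_continuous rangeFactorization_surjective q.continuous
  have hfq : FactorsThrough f.toOnePoint q := fun _ _ h ↦
    factorsThrough_toOnePoint hfu hf0 (congrArg Subtype.val h)
  let F := hq.lift f.toOnePoint hfq
  have hFq (a : OnePoint X) : F (q a) = f.toOnePoint a :=
    DFunLike.congr_fun (hq.lift_comp f.toOnePoint hfq) a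
  exact ⟨⟨F, hFq ∞⟩, ext fun x ↦ hFq x⟩

theorem mem_elemental_of_factorsThrough {u f : C₀(X, 𝕜)} (hfu : FactorsThrough f u)
    (hf0 : ∀ x, u x = 0 → f x = 0) : f ∈ elemental 𝕜 u := by
  obtain ⟨F, rfl⟩ := exists_precompHom_eq hfu hf0
  exact precompHom_mem_elemental u _ F

end Precomp

section Even

variable (𝕜 X : Type*) [RCLike 𝕜] [TopologicalSpace X] [Neg X]

def evenStarSubalgebra : NonUnitalStarSubalgebra 𝕜 C₀(X, 𝕜) where
  carrier := {f | ∀ x, f (-x) = f x}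
  add_mem' hf hg x := by simp [hf x, hg x]
  mul_mem' hf hg x := by simp [hf x, hg x]
  zero_mem' _ := rfl
  smul_mem' _ _ hf x := by simp [hf x]
  star_mem' hf x := by simp [hf x]

lemma isClosed_evenStarSubalgebra : IsClosed (evenStarSubalgebra 𝕜 X : Set C₀(X, 𝕜)) := by
  have hev (x : X) : Continuous fun f : C₀(X, 𝕜) ↦ f x :=
    (continuous_eval_const (F := X →ᵇ 𝕜) x).comp isometry_toBCF.continuous
  change IsClosed {f : C₀(X, 𝕜) | ∀ x, f (-x) = f x}
  rw [ofPred_forall]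
  exact isClosed_iInter fun x ↦ isClosed_eq (hev (-x)) (hev x)

end Even

end ZeroAtInftyContinuousMap

open ZeroAtInftyContinuousMap

/-- The closed *-subalgebra of `C₀(ℝ, ℂ)` generated by the function
`t ↦ (1 + t²)⁻¹` is exactly the subalgebra of even functions vanishing at infinity. -/
theorem closure_adjoin_inv_one_add_sq_eq_even
    (g : C₀(ℝ, ℂ)) (hg : ∀ t : ℝ, g t = (((1 + t^2)⁻¹ : ℝ) : ℂ)) :
    closure ((NonUnitalStarAlgebra.adjoin ℂ {g} :
        NonUnitalStarSubalgebra ℂ C₀(ℝ, ℂ)) : Set C₀(ℝ, ℂ)) =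
      {f : C₀(ℝ, ℂ) | ∀ t : ℝ, f (-t) = f t} := by
  have hg_even : g ∈ evenStarSubalgebra ℂ ℝ := fun t ↦ by simp [hg]
  change (elemental ℂ g : Set C₀(ℝ, ℂ)) = evenStarSubalgebra ℂ ℝ
  refine subset_antisymm (elemental.le_of_mem (isClosed_evenStarSubalgebra ℂ ℝ) hg_even)
    fun f hf ↦ mem_elemental_of_factorsThrough (fun a b hab ↦ ?_) fun t ht ↦ ?_
  · simp only [hg, Complex.ofReal_inj, inv_inj, add_right_inj] at hab
    obtain rfl | rfl := sq_eq_sq_iff_eq_or_eq_neg.mp hab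
    exacts [rfl, hf b]
  · rw [hg, Complex.ofReal_eq_zero] at ht
    exact absurd ht (by positivity)
end

section
/- Let H be a complex Hilbert space, D ∈ B(H) an invertible self-adjoint operator, and u ∈ B(H) a unitary such that [D, u] is compact. Then the positive spectral projections satisfy: P₊(u*Du) = u*P₊(D)u, the difference P₊(D) − u*P₊(D)u is compact, and relind(P₊(u*Du), P₊(D)) = −Index(P₊(D) u P₊(D) : Ran P₊(D) → Ran P₊(D)). -/
/-- The positive spectral projection `P₊(D) = χ_{(0,∞)}(D)` of a self-adjoint operator,
defined via the continuous functional calculus. -/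
noncomputable def posProj {H : Type*} [NormedAddCommGroup H] [InnerProductSpace ℂ H]
    [CompleteSpace H] (D : H →L[ℂ] H) : H →L[ℂ] H :=
  cfc (fun x : ℝ => Set.indicator (Set.Ioi (0:ℝ)) (fun _ => (1:ℝ)) x) D

/-!
Since `0 ∉ spec D`, the indicator of `(0, ∞)` is continuous on the spectrum, so `P := P₊(D)` is a
projection and, conjugation by `u` being a continuous ⋆-automorphism, `P₊(u*Du) = u*Pu`.
The operators `a` with `[a, u]` compact form a closed algebra containing the self-adjoint `D`,
hence its whole functional calculus, so `[P, u]` is compact.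
Then `PuP` and `Pu*P` are mutually adjoint operators on `Ran P`, inverse to each other modulo
compacts, so both have closed range and the kernel of each is the cokernel of the other:
`Index(Pu*P) = -Index(PuP)`. Finally `u*` maps `Ran P` onto `Ran(u*Pu)` and turns
`P : Ran(u*Pu) → Ran P` into `Pu*P`, so `relind(u*Pu, P) = Index(Pu*P)`.
-/

open Filter Topology ContinuousLinearMap
open scoped InnerProduct

section EssentialCommutant

variable {𝕜 E : Type*} [NontriviallyNormedField 𝕜] [NormedAddCommGroup E] [NormedSpace 𝕜 E]

def essentialCommutant (u : E →L[𝕜] E) : Subalgebra 𝕜 (E →L[𝕜] E) where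
  carrier := {a | IsCompactOperator (a * u - u * a)}
  mul_mem' {a b} ha hb := by
    have h : a * b * u - u * (a * b) = a * (b * u - u * b) + (a * u - u * a) * b := by
      noncomm_ring
    rw [Set.mem_ofPred_eq, h]
    exact (hb.clm_comp a).add (ha.comp_clm b)
  add_mem' {a b} ha hb := by
    have h : (a + b) * u - u * (a + b) = (a * u - u * a) + (b * u - u * b) := by noncomm_ring
    rw [Set.mem_ofPred_eq, h]
    exact ha.add hb
  algebraMap_mem' c := by
    rw [Set.mem_ofPred_eq, Algebra.commutes, sub_self]
    exact isCompactOperator_zero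

variable {u v a : E →L[𝕜] E}

theorem mem_essentialCommutant : a ∈ essentialCommutant u ↔ IsCompactOperator (a * u - u * a) :=
  Iff.rfl

theorem isClosed_essentialCommutant [CompleteSpace E] (u : E →L[𝕜] E) :
    IsClosed (essentialCommutant u : Set (E →L[𝕜] E)) :=
  isClosed_setOfPred_isCompactOperator.preimage (by fun_prop)

theorem isCompactOperator_sub_mul_mul_of_mul_eq_one_left (ha : a ∈ essentialCommutant u)
    (h : v * u = 1) : IsCompactOperator (a - v * a * u) := by
  have h' : a - v * a * u = v * (-(a * u - u * a)) := by
    rw [mul_neg, mul_sub, ← mul_assoc, ← mul_assoc, h, one_mul, neg_sub]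
  rw [h']
  exact (mem_essentialCommutant.mp ha).neg.clm_comp v

theorem isCompactOperator_sub_mul_mul_of_mul_eq_one_right (ha : a ∈ essentialCommutant u)
    (h : u * v = 1) : IsCompactOperator (a - u * a * v) := by
  have h' : a - u * a * v = (a * u - u * a) * v := by
    rw [sub_mul, mul_assoc a, h, mul_one]
  rw [h']
  exact (mem_essentialCommutant.mp ha).comp_clm v

end EssentialCommutant

theorem IsSelfAdjoint.cfc_mem {A : Type*} [Ring A] [StarRing A] [Algebra ℝ A] [TopologicalSpace A]
    [StarModule ℝ A] [ContinuousFunctionalCalculus ℝ A IsSelfAdjoint] [IsTopologicalRing A]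
    [ContinuousStar A] {S : Subalgebra ℝ A} (hS : IsClosed (S : Set A)) {a : A}
    (ha : IsSelfAdjoint a) (haS : a ∈ S) (f : ℝ → ℝ) : cfc f a ∈ S := by
  have hadjoin : (StarAlgebra.adjoin ℝ {a}).toSubalgebra = Algebra.adjoin ℝ {a} := by
    rw [StarAlgebra.adjoin_toSubalgebra, Set.star_singleton, ha.star_eq, Set.union_self]
  have hsub : (StarAlgebra.adjoin ℝ {a} : Set A) ⊆ S := by
    rw [← StarSubalgebra.coe_toSubalgebra, hadjoin]
    exact Algebra.adjoin_le (Set.singleton_subset_iff.mpr haS)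
  exact closure_minimal hsub hS (cfc_mem_elemental f a)

theorem continuousOn_indicator_Ioi_zero {s : Set ℝ} (hs : 0 ∉ s) :
    ContinuousOn (fun x : ℝ ↦ Set.indicator (Set.Ioi 0) (fun _ ↦ (1 : ℝ)) x) s := by
  classical
  simp only [← Set.piecewise_eq_indicator]
  refine ContinuousOn.piecewise ?_ continuousOn_const continuousOn_const
  rintro x ⟨hxs, hx⟩
  rw [frontier_Ioi, Set.mem_singleton_iff] at hx
  exact absurd (hx ▸ hxs) hs

section PosProj

variable {H : Type*} [NormedAddCommGroup H] [InnerProductSpace ℂ H] [CompleteSpace H]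
  {D : H →L[ℂ] H}

theorem isStarProjection_posProj (hD : IsUnit D) : IsStarProjection (posProj D) where
  isSelfAdjoint := cfc_predicate _ D
  isIdempotentElem := by
    have hcont := continuousOn_indicator_Ioi_zero (spectrum.zero_notMem ℝ hD)
    rw [IsIdempotentElem, posProj, ← cfc_mul _ _ D hcont hcont]
    refine cfc_congr fun x _ ↦ ?_
    by_cases hx : x ∈ Set.Ioi 0 <;> simp [hx]

theorem posProj_star_mul_mul (hD : IsSelfAdjoint D) (hDinv : IsUnit D) {u : H →L[ℂ] H}
    (hu : u ∈ unitary (H →L[ℂ] H)) :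
    posProj (star u * D * u) = star u * posProj D * u := by
  set φ := Unitary.conjStarAlgAut ℂ (H →L[ℂ] H) (star ⟨u, hu⟩)
  have hφ : ∀ a, φ a = star u * a * u := fun a ↦ by simp [φ]
  have hφc : Continuous φ := by
    simp only [funext hφ]
    fun_prop
  rw [← hφ, ← hφ, posProj, posProj]
  exact (StarAlgHomClass.map_cfc φ _ D
    (continuousOn_indicator_Ioi_zero (spectrum.zero_notMem ℝ hDinv)) hφc hD).symm

theorem posProj_mem_essentialCommutant (hD : IsSelfAdjoint D) {u : H →L[ℂ] H}
    (hDu : D ∈ essentialCommutant u) : posProj D ∈ essentialCommutant u :=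
  hD.cfc_mem (S := (essentialCommutant u).restrictScalars ℝ) (isClosed_essentialCommutant u) hDu _

end PosProj

section LeftInverseModuloCompacts

variable {𝕜 E F : Type*} [NontriviallyNormedField 𝕜] [NormedAddCommGroup E] [NormedSpace 𝕜 E]
  [NormedAddCommGroup F] [NormedSpace 𝕜 F] {T : E →L[𝕜] F} {S : F →L[𝕜] E}

theorem exists_subseq_tendsto_of_tendsto_apply_zero
    (h : IsCompactOperator (ContinuousLinearMap.id 𝕜 E - S ∘L T)) {x : ℕ → E}
    (hx : ∀ n, ‖x n‖ ≤ 1) (hTx : Tendsto (fun n ↦ T (x n)) atTop (𝓝 0)) :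
    ∃ w, ∃ φ : ℕ → ℕ, StrictMono φ ∧ Tendsto (x ∘ φ) atTop (𝓝 w) := by
  set K := ContinuousLinearMap.id 𝕜 E - S ∘L T
  have hKx : ∀ n, K (x n) ∈ closure (K '' Metric.closedBall 0 1) := fun n ↦
    subset_closure ⟨x n, by simpa using hx n, rfl⟩
  obtain ⟨w, -, φ, hφ, hKφ⟩ := (h.isCompact_closure_image_closedBall 1).tendsto_subseq hKx
  refine ⟨w, φ, hφ, ?_⟩
  -- `x = S (T x) + K x`, where `S (T x) → 0`
  have hSTφ : Tendsto (fun n ↦ S (T (x (φ n)))) atTop (𝓝 0) := by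
    have := (S.continuous.tendsto 0).comp (hTx.comp hφ.tendsto_atTop)
    rwa [map_zero] at this
  simpa [K, Function.comp_def] using hSTφ.add hKφ

end LeftInverseModuloCompacts

section ClosedRange

variable {𝕜 E F : Type*} [RCLike 𝕜] [NormedAddCommGroup E] [InnerProductSpace 𝕜 E]
  [NormedAddCommGroup F] [NormedSpace 𝕜 F] {T : E →L[𝕜] F} {S : F →L[𝕜] E}

theorem exists_pos_mul_norm_le_norm_apply_of_mem_orthogonal_ker
    (h : IsCompactOperator (ContinuousLinearMap.id 𝕜 E - S ∘L T)) :
    ∃ c > 0, ∀ x ∈ T.kerᗮ, c * ‖x‖ ≤ ‖T x‖ := by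
  by_contra! hcon
  have hunit : ∀ n : ℕ, ∃ z ∈ T.kerᗮ, ‖z‖ = 1 ∧ ‖T z‖ < 1 / (n + 1) := by
    intro n
    obtain ⟨x, hx, hTx⟩ := hcon (1 / (n + 1)) (by positivity)
    have hx0 : ‖x‖ ≠ 0 := fun h0 ↦ by simp [h0] at hTx; linarith [norm_nonneg (T x)]
    refine ⟨(‖x‖⁻¹ : 𝕜) • x, Submodule.smul_mem _ _ hx, ?_, ?_⟩
    · simp [norm_smul, hx0]
    · rw [map_smul, norm_smul, norm_inv, RCLike.norm_ofReal, abs_norm,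
        inv_mul_lt_iff₀ (by positivity)]
      linarith
  choose z hzK hz1 hTz using hunit
  have hTz0 : Tendsto (fun n ↦ T (z n)) atTop (𝓝 0) :=
    squeeze_zero_norm (fun n ↦ (hTz n).le) tendsto_one_div_add_atTop_nhds_zero_nat
  obtain ⟨w, φ, hφ, hzw⟩ := exists_subseq_tendsto_of_tendsto_apply_zero h (fun n ↦ (hz1 n).le)
    hTz0
  have hwK : w ∈ T.kerᗮ :=
    (Submodule.isClosed_orthogonal _).mem_of_tendsto hzw (.of_forall fun n ↦ hzK _)
  have hw1 : ‖w‖ = 1 := tendsto_nhds_unique hzw.norm (by simp [hz1])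
  have hTw : T w = 0 :=
    tendsto_nhds_unique ((T.continuous.tendsto w).comp hzw) (hTz0.comp hφ.tendsto_atTop)
  have hw0 : w = 0 := (Submodule.mem_orthogonal' _ _).mp hwK w hTw |> inner_self_eq_zero.mp
  simp [hw0] at hw1

theorem isClosed_range_of_isCompactOperator_id_sub_comp [CompleteSpace E]
    (h : IsCompactOperator (ContinuousLinearMap.id 𝕜 E - S ∘L T)) :
    IsClosed (T.range : Set F) := by
  obtain ⟨c, hc, hbound⟩ := exists_pos_mul_norm_le_norm_apply_of_mem_orthogonal_ker h
  set N := T.kerᗮ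
  have hanti : AntilipschitzWith ⟨c⁻¹, by positivity⟩ (T ∘L N.subtypeL) :=
    (T ∘L N.subtypeL).antilipschitz_of_bound fun x ↦ by
      show ‖(x : E)‖ ≤ c⁻¹ * ‖T x‖
      exact (le_inv_mul_iff₀ hc).mpr (hbound x x.2)
  have hrange : (T.range : Set F) = Set.range (T ∘L N.subtypeL) := by
    ext y
    constructor
    · rintro ⟨x, rfl⟩
      obtain ⟨a, ha, b, hb, rfl⟩ := N.exists_add_mem_mem_orthogonal x
      refine ⟨⟨a, ha⟩, ?_⟩
      have hTb : T b = 0 := by rwa [Submodule.orthogonal_orthogonal] at hb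
      simp [hTb]
    · rintro ⟨x, rfl⟩
      exact ⟨x, rfl⟩
  rw [hrange]
  exact hanti.isClosed_range (T ∘L N.subtypeL).uniformContinuous

end ClosedRange

theorem fredIndex_adjoint {E F : Type*} [NormedAddCommGroup E] [InnerProductSpace ℂ E]
    [CompleteSpace E] [NormedAddCommGroup F] [InnerProductSpace ℂ F] [CompleteSpace F]
    (T : E →L[ℂ] F) (h₁ : IsCompactOperator (ContinuousLinearMap.id ℂ E - T† ∘L T))
    (h₂ : IsCompactOperator (ContinuousLinearMap.id ℂ F - T ∘L T†)) :
    fredIndex (T† : F →ₗ[ℂ] E) = -fredIndex (T : E →ₗ[ℂ] F) := by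
  have : CompleteSpace (T.range) :=
    (isClosed_range_of_isCompactOperator_id_sub_comp h₁).completeSpace_coe
  have : CompleteSpace (T†.range) :=
    (isClosed_range_of_isCompactOperator_id_sub_comp (T := T†) h₂).completeSpace_coe
  rw [fredIndex, fredIndex, T.range.quotientEquivOrthogonal.toLinearEquiv.finrank_eq,
    T†.range.quotientEquivOrthogonal.toLinearEquiv.finrank_eq, orthogonal_range,
    orthogonal_range, adjoint_adjoint]
  ring

theorem fredIndex_comp_linearEquiv {E₁ E₂ F : Type*} [AddCommGroup E₁] [AddCommGroup E₂]
    [AddCommGroup F] [Module ℂ E₁] [Module ℂ E₂] [Module ℂ F]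
    (T : E₂ →ₗ[ℂ] F) (e : E₁ ≃ₗ[ℂ] E₂) :
    fredIndex (T ∘ₗ (e : E₁ →ₗ[ℂ] E₂)) = fredIndex T := by
  rw [fredIndex, fredIndex, LinearMap.ker_comp, LinearMap.range_comp, LinearEquiv.range,
    Submodule.map_top, (e.ofSubmodule' (LinearMap.ker T)).finrank_eq]

namespace Submodule

variable {𝕜 E : Type*} [RCLike 𝕜] [NormedAddCommGroup E] [InnerProductSpace 𝕜 E]
  (K : Submodule 𝕜 E) [CompleteSpace K]

noncomputable def compression (A : E →L[𝕜] E) : K →L[𝕜] K :=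
  K.orthogonalProjectionOnto ∘L A ∘L K.subtypeL

theorem coe_compression_apply (A : E →L[𝕜] E) (x : K) :
    (K.compression A x : E) = K.starProjection (A x) := rfl

theorem compression_sub (A B : E →L[𝕜] E) :
    K.compression (A - B) = K.compression A - K.compression B := by
  ext x
  simp [coe_compression_apply]

theorem compression_comp_compression (A B : E →L[𝕜] E) :
    K.compression A ∘L K.compression B = K.compression (A ∘L K.starProjection ∘L B) := rfl

theorem compression_starProjection : K.compression K.starProjection = .id 𝕜 K := by
  ext x
  simp [coe_compression_apply]

theorem _root_.IsCompactOperator.compression {A : E →L[𝕜] E} (hA : IsCompactOperator A) :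
    IsCompactOperator (K.compression A) :=
  (hA.comp_clm K.subtypeL).clm_comp K.orthogonalProjectionOnto

theorem isCompactOperator_id_sub_compression_comp {A B : E →L[𝕜] E}
    (h : IsCompactOperator (K.starProjection - A ∘L K.starProjection ∘L B)) :
    IsCompactOperator (ContinuousLinearMap.id 𝕜 K - K.compression A ∘L K.compression B) := by
  rw [← compression_starProjection, compression_comp_compression, ← compression_sub]
  exact h.compression K

theorem adjoint_compression [CompleteSpace E] (A : E →L[𝕜] E) :
    (K.compression A)† = K.compression (A†) := by
  simp only [compression, adjoint_comp, adjoint_subtypeL, adjoint_orthogonalProjectionOnto,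
    comp_assoc]

end Submodule

section RelativeIndex

variable {H : Type*} [NormedAddCommGroup H] [InnerProductSpace ℂ H]

theorem range_mul_mul_of_mul_eq_one {P u v : H →L[ℂ] H} (h : u * v = 1) :
    LinearMap.range ((v * P * u : H →L[ℂ] H) : H →ₗ[ℂ] H) =
      (LinearMap.range (P : H →ₗ[ℂ] H)).map (v : H →ₗ[ℂ] H) := by
  have hsurj : Function.Surjective u := fun y ↦ ⟨v y, congr($h y)⟩
  rw [toLinearMap_mul, toLinearMap_mul, Module.End.mul_eq_comp, Module.End.mul_eq_comp,
    LinearMap.range_comp_of_range_eq_top _ (LinearMap.range_eq_top.mpr hsurj),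
    LinearMap.range_comp]

theorem relind_mul_mul_of_mul_eq_one {P u v : H →L[ℂ] H} (h : u * v = 1) :
    relind (v * P * u) P = fredIndex (compressEndo P v) := by
  have hinj : Function.Injective (v : H →ₗ[ℂ] H) :=
    Function.LeftInverse.injective (g := u) fun x ↦ congr($h x)
  let e := (Submodule.equivMapOfInjective _ hinj (LinearMap.range (P : H →ₗ[ℂ] H))).trans
    (LinearEquiv.ofEq _ _ (range_mul_mul_of_mul_eq_one h).symm)
  rw [relind, ← fredIndex_comp_linearEquiv _ e]
  rfl

theorem fredIndex_compressEndo_star [CompleteSpace H] {P U : H →L[ℂ] H} (hP : IsStarProjection P)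
    (h₁ : IsCompactOperator (P - star U * P * U)) (h₂ : IsCompactOperator (P - U * P * star U)) :
    fredIndex (compressEndo P (star U)) = -fredIndex (compressEndo P U) := by
  set K := LinearMap.range (P : H →ₗ[ℂ] H)
  have : CompleteSpace K := hP.isIdempotentElem.isClosed_range.completeSpace_coe
  obtain ⟨_, hPK⟩ := isStarProjection_iff_eq_starProjection_range.mp hP
  have hcompr : ∀ A, compressEndo P A = K.compression A := fun A ↦ by
    ext x
    exact DFunLike.congr_fun hPK (A x)
  rw [hcompr, hcompr, star_eq_adjoint, ← K.adjoint_compression]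
  rw [hPK] at h₁ h₂
  apply fredIndex_adjoint <;> rw [K.adjoint_compression, ← star_eq_adjoint]
  exacts [K.isCompactOperator_id_sub_compression_comp h₁,
    K.isCompactOperator_id_sub_compression_comp h₂]

end RelativeIndex

/-- If `D` is an invertible bounded self-adjoint operator and `u` a unitary
with `[D, u]` compact, then `P₊(u*Du) = u*P₊(D)u`, the difference `P₊(D) − u*P₊(D)u` is
compact, and `relind(P₊(u*Du), P₊(D)) = −Index(P₊(D) u P₊(D) : Ran P₊(D) → Ran P₊(D))`. -/
theorem relind_posProj_conjugation
    {H : Type*} [NormedAddCommGroup H] [InnerProductSpace ℂ H] [CompleteSpace H]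
    (D u : H →L[ℂ] H) (hD : IsSelfAdjoint D) (hDinv : IsUnit D)
    (hu₁ : star u * u = 1) (hu₂ : u * star u = 1)
    (hcomm : IsCompactOperator ⇑(D * u - u * D)) :
    posProj (star u * D * u) = star u * posProj D * u ∧
    IsCompactOperator ⇑(posProj D - star u * posProj D * u) ∧
    relind (posProj (star u * D * u)) (posProj D) =
      - fredIndex (compressEndo (posProj D) u) := by
  have hconj := posProj_star_mul_mul hD hDinv ⟨hu₁, hu₂⟩
  have hP := posProj_mem_essentialCommutant hD (mem_essentialCommutant.mpr hcomm)
  have h₁ := isCompactOperator_sub_mul_mul_of_mul_eq_one_left hP hu₁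
  have h₂ := isCompactOperator_sub_mul_mul_of_mul_eq_one_right hP hu₂
  refine ⟨hconj, h₁, ?_⟩
  rw [hconj, relind_mul_mul_of_mul_eq_one hu₂]
  exact fredIndex_compressEndo_star (isStarProjection_posProj hDinv) h₁ h₂
end
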